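/- arXiv:1104.2858 — 10 statements merged into one kernel-verified Lean document; each statement's English description precedes it below -/
import Mathlib

section
/- For every integer i > 1, the polynomial ψ_i(x,y) = ((x+y)^{p^{i-1}} - (x^p+y^p)^{p^{i-2}})/p^{i-1} has integer coefficients, where p is a prime. -/
/-!
Since `p ∣ (a + b)^p - (a^p + b^p)` in any commutative ring, raising both terms to the power
`p^(i-2)` raises the divisibility to `p^(i-1)` (`dvd_sub_pow_of_dvd_sub`). Applied to `x, y` in
`ℤ[x, y]`, this exhibits the numerator of `ψ_i` as `p^(i-1)` times an integral polynomial.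
-/

open MvPolynomial

theorem natCast_dvd_add_pow_prime_sub {R : Type*} [CommRing R] {p : ℕ} (hp : p.Prime)
    (a b : R) : (p : R) ∣ (a + b) ^ p - (a ^ p + b ^ p) := by
  obtain ⟨r, hr⟩ := exists_add_pow_prime_eq hp a b
  exact ⟨a * b * r, by rw [hr]; ring⟩

theorem pow_dvd_add_pow_prime_pow_sub {R : Type*} [CommRing R] {p : ℕ} (hp : p.Prime)
    (a b : R) (k : ℕ) :
    (p : R) ^ (k + 1) ∣ (a + b) ^ p ^ (k + 1) - (a ^ p + b ^ p) ^ p ^ k := by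
  have h := dvd_sub_pow_of_dvd_sub (natCast_dvd_add_pow_prime_sub hp a b) k
  rwa [← pow_mul, ← pow_succ'] at h

theorem exists_map_intCast_eq_C_inv_mul_of_dvd {σ : Type*} {m : ℤ} (hm : m ≠ 0)
    {f : MvPolynomial σ ℤ} (h : (m : MvPolynomial σ ℤ) ∣ f) :
    ∃ q : MvPolynomial σ ℤ,
      map (Int.castRingHom ℚ) q = C ((m : ℚ)⁻¹) * map (Int.castRingHom ℚ) f := by
  obtain ⟨q, rfl⟩ := h
  refine ⟨q, ?_⟩
  have hm' : (m : ℚ) ≠ 0 := Int.cast_ne_zero.mpr hm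
  rw [map_mul, map_intCast, ← mul_assoc, ← map_intCast (C : ℚ →+* MvPolynomial σ ℚ), ← C_mul,
    inv_mul_cancel₀ hm', C_1, one_mul]

/-- For every integer `i > 1`, the polynomial
`ψ_i(x,y) = ((x+y)^{p^{i-1}} - (x^p+y^p)^{p^{i-2}})/p^{i-1}` has integer coefficients. -/
theorem psi_integral (p : ℕ) (hp : p.Prime) (i : ℕ) (hi : 1 < i) :
    ∃ q : MvPolynomial (Fin 2) ℤ,
      MvPolynomial.map (Int.castRingHom ℚ) q =
        C (((p : ℚ) ^ (i - 1))⁻¹) *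
          ((X 0 + X 1) ^ p ^ (i - 1) - (X 0 ^ p + X 1 ^ p) ^ p ^ (i - 2)) := by
  obtain ⟨k, rfl⟩ : ∃ k, i = k + 2 := ⟨i - 2, by omega⟩
  have hdvd := pow_dvd_add_pow_prime_pow_sub hp (X 0 : MvPolynomial (Fin 2) ℤ) (X 1) k
  have hpk : ((p ^ (k + 1) : ℕ) : ℤ) ≠ 0 := by exact_mod_cast (pow_pos hp.pos _).ne'
  obtain ⟨q, hq⟩ := exists_map_intCast_eq_C_inv_mul_of_dvd hpk (by exact_mod_cast hdvd)
  exact ⟨q, by simpa using hq⟩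
end

section
/- For every i > 1, the integral polynomials ψ_i satisfy the recursive formula ψ_{i+1}(x,y) = Σ_{j=1}^{p} C(p,j) · p^{j(i-1)-i} · ψ_i(x,y)^j · (x^p+y^p)^{(p-j)p^{i-2}}. -/
/-! Put `B = x^p + y^p` and `D = p^{i-1} ψ_i = (x+y)^{p^{i-1}} - B^{p^{i-2}}`. Then
`p^i ψ_{i+1} = (D + B^{p^{i-2}})^p - (B^{p^{i-2}})^p`, and the binomial theorem expands this as
`Σ_{j=1}^p C(p,j) D^j B^{(p-j)p^{i-2}}`; dividing by `p^i` gives the recursion. -/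

open MvPolynomial

/-- The Witt addition auxiliary polynomials `ψ_i`, defined over `ℚ`:
`ψ_1(x,y) = x + y` and, for `i ≥ 2`,
`ψ_i(x,y) = ((x+y)^{p^{i-1}} - (x^p+y^p)^{p^{i-2}})/p^{i-1}`
(these have integer coefficients). -/
noncomputable def psiQ (p : ℕ) : ℕ → MvPolynomial (Fin 2) ℚ
  | 0 => 0
  | 1 => X 0 + X 1
  | (i + 2) =>
      C (((p : ℚ) ^ (i + 1))⁻¹) *
        ((X 0 + X 1) ^ p ^ (i + 1) - (X 0 ^ p + X 1 ^ p) ^ p ^ i)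

theorem add_pow_sub_pow_eq_sum_Icc {R : Type*} [CommRing R] (x y : R) (n : ℕ) :
    (x + y) ^ n - y ^ n = ∑ j ∈ Finset.Icc 1 n, x ^ j * y ^ (n - j) * n.choose j := by
  rw [add_pow, Finset.sum_range_eq_add_Ico _ (by omega), Finset.Ico_add_one_right_eq_Icc]
  simp

theorem zpow_mul_sub_eq_pow_div {K : Type*} [Field K] {a : K} (ha : a ≠ 0) (m n j : ℕ) :
    a ^ ((j : ℤ) * m - n) = (a ^ m) ^ j / a ^ n := by
  rw [zpow_sub₀ ha, mul_comm, zpow_mul, zpow_natCast, zpow_natCast, zpow_natCast]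

section psiQ

variable {p : ℕ}

theorem psiQ_add_two (k : ℕ) :
    psiQ p (k + 2) = C (((p : ℚ) ^ (k + 1))⁻¹) *
      ((X 0 + X 1) ^ p ^ (k + 1) - (X 0 ^ p + X 1 ^ p) ^ p ^ k) :=
  rfl

theorem C_pow_mul_psiQ_add_two (hp : p ≠ 0) (k : ℕ) :
    C ((p : ℚ) ^ (k + 1)) * psiQ p (k + 2) =
      (X 0 + X 1) ^ p ^ (k + 1) - (X 0 ^ p + X 1 ^ p) ^ p ^ k := by
  rw [psiQ_add_two, ← mul_assoc, ← map_mul, mul_inv_cancel₀ (by positivity), map_one, one_mul]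

end psiQ

/-- for every `i > 1`,
`ψ_{i+1}(x,y) = Σ_{j=1}^{p} C(p,j) · p^{j(i-1)-i} · ψ_i(x,y)^j · (x^p+y^p)^{(p-j)p^{i-2}}`. -/
theorem psi_recursive (p : ℕ) (hp : p.Prime) (i : ℕ) (hi : 1 < i) :
    psiQ p (i + 1) =
      ∑ j ∈ Finset.Icc 1 p,
        (p.choose j : MvPolynomial (Fin 2) ℚ) *
          C ((p : ℚ) ^ ((j : ℤ) * ((i : ℤ) - 1) - (i : ℤ))) *
          (psiQ p i) ^ j * (X 0 ^ p + X 1 ^ p) ^ ((p - j) * p ^ (i - 2)) := by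
  obtain ⟨k, rfl⟩ : ∃ k, i = k + 2 := ⟨i - 2, by omega⟩
  set B : MvPolynomial (Fin 2) ℚ := X 0 ^ p + X 1 ^ p
  have binomial : (X 0 + X 1) ^ p ^ (k + 2) - B ^ p ^ (k + 1) =
      ∑ j ∈ Finset.Icc 1 p, (C ((p : ℚ) ^ (k + 1)) * psiQ p (k + 2)) ^ j * (B ^ p ^ k) ^ (p - j) *
        (p.choose j : MvPolynomial (Fin 2) ℚ) := by
    rw [← add_pow_sub_pow_eq_sum_Icc, C_pow_mul_psiQ_add_two hp.ne_zero, sub_add_cancel, ← pow_mul,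
      ← pow_mul, ← pow_succ, ← pow_succ]
  rw [psiQ_add_two (k + 1), binomial, Finset.mul_sum]
  refine Finset.sum_congr rfl fun j _ => ?_
  have hc : ((k + 2 : ℕ) : ℤ) - 1 = ((k + 1 : ℕ) : ℤ) := by push_cast; ring
  rw [Nat.add_sub_cancel, hc, zpow_mul_sub_eq_pow_div (by exact_mod_cast hp.ne_zero),
    div_eq_mul_inv, ← pow_mul, mul_comm (p ^ k)]
  simp only [mul_pow, map_mul, map_pow]
  ring
end

section
/- In the ring of length n Witt vectors W_n(Z) over any commutative ring Z, for all x, y ∈ Z one has the identity x+y (Teichmüller lift of x+y) = Σ_{i=0}^{n-1} V^i(ψ_{i+1}(x̲, y̲)), where x̲ denotes the Teichmüller representative (x,0,…,0), V is the Verschiebung operator, and ψ_{i+1} is evaluated on Witt vectors. -/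
/-!
It suffices to treat the universal case `Z = ℤ[X₀, X₁]`, `x = X₀`, `y = X₁`, and since
`ℤ[X₀, X₁] → ℚ[X₀, X₁]` is injective, we may work over a `ℚ`-algebra. There `p` is a
non-zero-divisor, so the first `n` coefficients of a Witt vector are determined by its first
`n` ghost components. The `k`-th ghost component of `V^j (ψ_{j+1}(x̲, y̲))` is
`p^j ψ_{j+1}(x^{p^{k-j}}, y^{p^{k-j}})`, and by the defining formula of the `ψ`'s these terms
telescope to `(x + y)^{p^k}`, the `k`-th ghost component of the Teichmüller lift of `x + y`.
-/

open MvPolynomial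

theorem RingHom.map_aeval_vecCons_two {A B : Type*} [CommRing A] [CommRing B] (g : A →+* B)
    (a b : A) (P : MvPolynomial (Fin 2) ℤ) : g (aeval ![a, b] P) = aeval ![g a, g b] P := by
  have hvec : (fun i => g.toIntAlgHom (![a, b] i)) = ![g a, g b] := by
    funext i
    fin_cases i <;> rfl
  rw [show g (aeval ![a, b] P) = g.toIntAlgHom (aeval ![a, b] P) from rfl, comp_aeval_apply, hvec]

namespace WittVector

variable {p : ℕ} [Fact p.Prime] {R S : Type*} [CommRing R] [CommRing S]

theorem coeff_eq_of_ghostComponent_eq (hp : IsLeftRegular (p : R)) {A B : WittVector p R}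
    {n : ℕ} (h : ∀ k < n, ghostComponent k A = ghostComponent k B) :
    ∀ k < n, A.coeff k = B.coeff k := by
  intro k
  induction k using Nat.strong_induction_on with
  | _ k ih =>
    intro hk
    have hghost := h k hk
    rw [ghostComponent_apply, ghostComponent_apply, aeval_wittPolynomial, aeval_wittPolynomial,
      Finset.sum_range_succ, Finset.sum_range_succ] at hghost
    have hlower : ∑ i ∈ Finset.range k, (p : R) ^ i * A.coeff i ^ p ^ (k - i) =
        ∑ i ∈ Finset.range k, (p : R) ^ i * B.coeff i ^ p ^ (k - i) :=
      Finset.sum_congr rfl fun i hi => by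
        rw [ih i (Finset.mem_range.1 hi) ((Finset.mem_range.1 hi).trans hk)]
    rw [hlower, Nat.sub_self, pow_zero, pow_one, pow_one, add_left_cancel_iff] at hghost
    exact hp.pow k hghost

theorem map_iterate_verschiebung (f : R →+* S) (i : ℕ) (u : WittVector p R) :
    map f (verschiebung^[i] u) = verschiebung^[i] (map f u) :=
  Function.Semiconj.iterate_right (map_verschiebung f) i u

theorem ghostComponent_iterate_verschiebung (u : WittVector p R) (i k : ℕ) :
    ghostComponent (k + i) (verschiebung^[i] u) = (p : R) ^ i * ghostComponent k u := by
  induction i with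
  | zero => simp
  | succ i ih =>
    rw [Function.iterate_succ_apply', ← add_assoc, ghostComponent_verschiebung, ih, pow_succ']
    ring

theorem ghostComponent_iterate_verschiebung_of_lt (u : WittVector p R) {i k : ℕ} (hk : k < i) :
    ghostComponent k (verschiebung^[i] u) = 0 := by
  induction i generalizing k with
  | zero => omega
  | succ i ih =>
    rw [Function.iterate_succ_apply']
    cases k with
    | zero => exact ghostComponent_zero_verschiebung _
    | succ k => rw [ghostComponent_verschiebung, ih (by omega), mul_zero]

theorem ghostComponent_aeval_teichmuller (P : MvPolynomial (Fin 2) ℤ) (m : ℕ) (a b : R) :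
    ghostComponent m (aeval ![teichmuller p a, teichmuller p b] P) =
      aeval ![a ^ p ^ m, b ^ p ^ m] P := by
  rw [(ghostComponent m).map_aeval_vecCons_two, ghostComponent_teichmuller,
    ghostComponent_teichmuller]

end WittVector

open WittVector

def IsPsiFamily (p : ℕ) (ψ : ℕ → MvPolynomial (Fin 2) ℤ) : Prop :=
  ψ 1 = X 0 + X 1 ∧ ∀ i : ℕ, 1 < i →
    MvPolynomial.map (Int.castRingHom ℚ) (ψ i) =
      C (((p : ℚ) ^ (i - 1))⁻¹) *
        ((X 0 + X 1) ^ p ^ (i - 1) - (X 0 ^ p + X 1 ^ p) ^ p ^ (i - 2))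

noncomputable def sumVerschiebungPsi (p : ℕ) [Fact p.Prime] (ψ : ℕ → MvPolynomial (Fin 2) ℤ)
    (n : ℕ) {R : Type*} [CommRing R] (x y : R) : WittVector p R :=
  ∑ i ∈ Finset.range n, verschiebung^[i] (aeval ![teichmuller p x, teichmuller p y] (ψ (i + 1)))

section

variable {p : ℕ} [Fact p.Prime] {ψ : ℕ → MvPolynomial (Fin 2) ℤ}

theorem map_sumVerschiebungPsi {R S : Type*} [CommRing R] [CommRing S] (f : R →+* S) (n : ℕ)
    (x y : R) : map f (sumVerschiebungPsi p ψ n x y) = sumVerschiebungPsi p ψ n (f x) (f y) := by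
  refine (map_sum _ _ _).trans (Finset.sum_congr rfl fun i _ => ?_)
  rw [map_iterate_verschiebung, RingHom.map_aeval_vecCons_two, map_teichmuller, map_teichmuller]

variable {S : Type*} [CommRing S] [Algebra ℚ S]

theorem IsPsiFamily.pow_mul_aeval (hψ : IsPsiFamily p ψ) (j : ℕ) (c d : S) :
    (p : S) ^ (j + 1) * aeval ![c, d] (ψ (j + 2)) =
      (c + d) ^ p ^ (j + 1) - (c ^ p + d ^ p) ^ p ^ j := by
  have hp : (p : ℚ) ≠ 0 := Nat.cast_ne_zero.2 (Fact.out : p.Prime).ne_zero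
  rw [← aeval_map_algebraMap ℚ, algebraMap_int_eq, hψ.2 (j + 2) (by omega)]
  simp only [map_mul, map_sub, map_add, map_pow, aeval_C, aeval_X, Matrix.cons_val_zero,
    Matrix.cons_val_one, Nat.add_sub_cancel, show j + 2 - 1 = j + 1 by omega]
  rw [← mul_assoc, ← map_natCast (algebraMap ℚ S), ← map_pow, ← map_mul,
    mul_inv_cancel₀ (pow_ne_zero _ hp), map_one, one_mul]

theorem IsPsiFamily.sum_pow_mul_aeval (hψ : IsPsiFamily p ψ) (k : ℕ) (a b : S) :
    ∑ j ∈ Finset.range (k + 1),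
        (p : S) ^ j * aeval ![a ^ p ^ (k - j), b ^ p ^ (k - j)] (ψ (j + 1)) = (a + b) ^ p ^ k := by
  induction k generalizing a b with
  | zero => simp [hψ.1]
  | succ k ih =>
    have hlower : ∀ j ∈ Finset.range (k + 1),
        (p : S) ^ j * aeval ![a ^ p ^ (k + 1 - j), b ^ p ^ (k + 1 - j)] (ψ (j + 1)) =
          (p : S) ^ j * aeval ![(a ^ p) ^ p ^ (k - j), (b ^ p) ^ p ^ (k - j)] (ψ (j + 1)) := by
      intro j hj
      have hkj : k + 1 - j = k - j + 1 := by grind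
      simp only [hkj, pow_succ', pow_mul]
    rw [Finset.sum_range_succ, Finset.sum_congr rfl hlower, ih, Nat.sub_self, pow_zero,
      pow_one, pow_one, hψ.pow_mul_aeval]
    ring

theorem IsPsiFamily.ghostComponent_sumVerschiebungPsi (hψ : IsPsiFamily p ψ) {k n : ℕ}
    (hk : k < n) (a b : S) :
    ghostComponent k (sumVerschiebungPsi p ψ n a b) = (a + b) ^ p ^ k := by
  have hvanish : ∀ j ∈ Finset.range n, j ∉ Finset.range (k + 1) →
      ghostComponent k (verschiebung^[j] (aeval ![teichmuller p a, teichmuller p b] (ψ (j + 1))))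
        = 0 :=
    fun j _ hj => ghostComponent_iterate_verschiebung_of_lt _ (by simpa using hj)
  have hterm : ∀ j ∈ Finset.range (k + 1),
      ghostComponent k (verschiebung^[j] (aeval ![teichmuller p a, teichmuller p b] (ψ (j + 1))))
        = (p : S) ^ j * aeval ![a ^ p ^ (k - j), b ^ p ^ (k - j)] (ψ (j + 1)) := by
    intro j hj
    rw [← ghostComponent_aeval_teichmuller, ← ghostComponent_iterate_verschiebung,
      Nat.sub_add_cancel (Finset.mem_range_succ_iff.1 hj)]
  rw [sumVerschiebungPsi, map_sum, ← Finset.sum_subset (Finset.range_subset_range.2 hk) hvanish,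
    Finset.sum_congr rfl hterm, hψ.sum_pow_mul_aeval]

theorem IsPsiFamily.coeff_teichmuller_add (hψ : IsPsiFamily p ψ) {k n : ℕ} (hk : k < n)
    (a b : S) : (teichmuller p (a + b)).coeff k = (sumVerschiebungPsi p ψ n a b).coeff k := by
  have hp0 : (p : ℚ) ≠ 0 := Nat.cast_ne_zero.2 (Fact.out : p.Prime).ne_zero
  have hp : IsLeftRegular (p : S) := by
    simpa using ((IsUnit.mk0 _ hp0).map (algebraMap ℚ S)).isRegular.left
  refine coeff_eq_of_ghostComponent_eq hp (fun m hm => ?_) k hk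
  rw [ghostComponent_teichmuller, hψ.ghostComponent_sumVerschiebungPsi hm]

theorem IsPsiFamily.coeff_teichmuller_X_add_X (hψ : IsPsiFamily p ψ) {k n : ℕ} (hk : k < n) :
    (teichmuller p (X 0 + X 1 : MvPolynomial (Fin 2) ℤ)).coeff k =
      (sumVerschiebungPsi p ψ n (X 0) (X 1)).coeff k := by
  apply MvPolynomial.map_injective (Int.castRingHom ℚ) Int.cast_injective
  rw [← WittVector.map_coeff, ← WittVector.map_coeff, map_teichmuller, map_sumVerschiebungPsi,
    map_add, MvPolynomial.map_X, MvPolynomial.map_X]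
  exact hψ.coeff_teichmuller_add hk _ _

end

/-- in the ring of length-`n` Witt vectors over any commutative ring `Z`,
`(x+y)̲ = Σ_{i=0}^{n-1} V^i (ψ_{i+1}(x̲, y̲))`, where `x̲` is the Teichmüller
representative and `V` the Verschiebung.  The integral polynomials `ψ` are characterized by
`ψ_1 = x + y` and `ψ_i = ((x+y)^{p^{i-1}} - (x^p+y^p)^{p^{i-2}})/p^{i-1}` for `i > 1`;
the identity in `W_n(Z)` is expressed by truncating an identity of (infinite) Witt vectors
to length `n`. -/
theorem teichmuller_add_eq_sum_verschiebung_psi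
    (p : ℕ) [Fact p.Prime]
    (ψ : ℕ → MvPolynomial (Fin 2) ℤ)
    (hψ1 : ψ 1 = X 0 + X 1)
    (hψ : ∀ i : ℕ, 1 < i →
      MvPolynomial.map (Int.castRingHom ℚ) (ψ i) =
        C (((p : ℚ) ^ (i - 1))⁻¹) *
          ((X 0 + X 1) ^ p ^ (i - 1) - (X 0 ^ p + X 1 ^ p) ^ p ^ (i - 2)))
    (Z : Type*) [CommRing Z] (n : ℕ) (x y : Z) :
    WittVector.truncate n (WittVector.teichmuller p (x + y)) =
      WittVector.truncate n (∑ i ∈ Finset.range n,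
        WittVector.verschiebung^[i]
          (aeval ![WittVector.teichmuller p x, WittVector.teichmuller p y] (ψ (i + 1)))) := by
  let g : MvPolynomial (Fin 2) ℤ →+* Z := (aeval ![x, y]).toRingHom
  have hx : g (X 0) = x := aeval_X _ _
  have hy : g (X 1) = y := aeval_X _ _
  change _ = truncate n (sumVerschiebungPsi p ψ n x y)
  ext i
  rw [coeff_truncate, coeff_truncate, ← hx, ← hy, ← map_add, ← map_teichmuller,
    ← map_sumVerschiebungPsi, WittVector.map_coeff, WittVector.map_coeff,
    IsPsiFamily.coeff_teichmuller_X_add_X ⟨hψ1, hψ⟩ i.2]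
end

section
/- Let A be an associative ring and m ≥ 0. If x, y ∈ A satisfy [x,y] ≡ 0 mod p^{m+1}·A and [x,[x,y]] ≡ 0 mod p^{m+2}·A and [y,[x,y]] ≡ 0 mod p^{m+2}·A, and p is an odd prime, then (xy)^p ≡ x^p y^p mod p^{m+2}·A. -/
/-!
Modulo `p^{m+2} A` (a two-sided ideal, as `p` is central), the commutator `c = [x, y]` commutes
with `x` and `y`, satisfies `c² = 0` because `2(m+1) ≥ m+2`, and is killed by `p`. Under the first
three relations `(xy)^n = x^n y^n - (n choose 2) x^{n-1} y^{n-1} c`, and for odd `p` the prime `p`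
divides `p choose 2`, so the correction term vanishes.
-/

namespace Ideal

variable {R : Type*} [Ring R] {z : R}

theorem mem_span_singleton_of_forall_commute (hz : ∀ a, Commute z a) {x : R} :
    x ∈ span {z} ↔ ∃ a, x = z * a := by
  simp_rw [mem_span_singleton', fun a => (hz a).eq, eq_comm]

theorem isTwoSided_span_singleton_of_forall_commute (hz : ∀ a, Commute z a) :
    (span {z}).IsTwoSided := by
  refine ⟨fun b hx => ?_⟩
  obtain ⟨a, rfl⟩ := (mem_span_singleton_of_forall_commute hz).1 hx
  exact (mem_span_singleton_of_forall_commute hz).2 ⟨a * b, mul_assoc z a b⟩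

end Ideal

section Commutator

variable {R : Type*} [Ring R] {x y : R}

theorem pow_mul_mul_eq_sub_nsmul_lie (hy : Commute y ⁅x, y⁆) (k : ℕ) :
    y ^ k * x * y = x * y ^ (k + 1) - k • (y ^ k * ⁅x, y⁆) := by
  induction k with
  | zero => simp
  | succ k ih =>
    have hyx : y * x = x * y - ⁅x, y⁆ := by rw [Ring.lie_def]; abel
    calc y ^ (k + 1) * x * y = y * (y ^ k * x * y) := by rw [pow_succ']; noncomm_ring
      _ = y * x * y ^ (k + 1) - k • (y ^ (k + 1) * ⁅x, y⁆) := by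
        rw [ih, mul_sub, mul_smul_comm, ← mul_assoc, ← mul_assoc, ← pow_succ']
      _ = x * y ^ (k + 2) - (k + 1) • (y ^ (k + 1) * ⁅x, y⁆) := by
        rw [hyx, sub_mul, ← (hy.pow_left (k + 1)).eq, mul_assoc, ← pow_succ', add_smul, one_smul]
        abel

theorem mul_pow_succ_eq_sub_choose_nsmul_lie (hx : Commute x ⁅x, y⁆) (hy : Commute y ⁅x, y⁆)
    (hsq : ⁅x, y⁆ * ⁅x, y⁆ = 0) (n : ℕ) :
    (x * y) ^ (n + 1) =
      x ^ (n + 1) * y ^ (n + 1) - (n + 1).choose 2 • (x ^ n * y ^ n * ⁅x, y⁆) := by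
  have hstep (k : ℕ) : x ^ k * y ^ k * (x * y) =
      x ^ (k + 1) * y ^ (k + 1) - k • (x ^ k * y ^ k * ⁅x, y⁆) := by
    rw [mul_assoc, ← mul_assoc (y ^ k), pow_mul_mul_eq_sub_nsmul_lie hy, mul_sub, mul_smul_comm,
      pow_succ x k]
    noncomm_ring
  induction n with
  | zero => simp
  | succ n ih =>
    have hc : x ^ n * y ^ n * ⁅x, y⁆ * (x * y) = x ^ (n + 1) * y ^ (n + 1) * ⁅x, y⁆ := by
      rw [mul_assoc _ ⁅x, y⁆, ← (hx.mul_left hy).eq, ← mul_assoc, hstep, sub_mul, smul_mul_assoc,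
        mul_assoc _ ⁅x, y⁆, hsq, mul_zero, smul_zero, sub_zero]
    rw [pow_succ, ih, sub_mul, smul_mul_assoc, hstep, hc, Nat.choose_succ_succ' (n + 1),
      Nat.choose_one_right, add_smul (n + 1)]
    abel

theorem mul_pow_prime_eq_of_lie {p : ℕ} (hp : p.Prime) (hodd : p ≠ 2) (hx : Commute x ⁅x, y⁆)
    (hy : Commute y ⁅x, y⁆) (hsq : ⁅x, y⁆ * ⁅x, y⁆ = 0) (hchar : p • ⁅x, y⁆ = 0) :
    (x * y) ^ p = x ^ p * y ^ p := by
  obtain ⟨r, hr⟩ : p ∣ p.choose 2 :=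
    hp.dvd_choose_self two_ne_zero (lt_of_le_of_ne hp.two_le (Ne.symm hodd))
  obtain ⟨n, rfl⟩ := Nat.exists_eq_add_one.2 hp.pos
  rw [mul_pow_succ_eq_sub_choose_nsmul_lie hx hy hsq, hr, mul_comm, mul_smul, ← mul_smul_comm,
    hchar]
  simp

end Commutator

/-- if `p` is an odd prime, `A` an associative ring, and `x, y ∈ A` satisfy
`[x,y] ≡ 0 mod p^{m+1}A`, `[x,[x,y]] ≡ 0 mod p^{m+2}A` and `[y,[x,y]] ≡ 0 mod p^{m+2}A`,
then `(xy)^p ≡ x^p y^p mod p^{m+2}A`. -/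
theorem mul_pow_p_congr (p : ℕ) (hp : p.Prime) (hodd : p ≠ 2)
    (A : Type*) [Ring A] (m : ℕ) (x y : A)
    (h1 : ∃ a : A, x * y - y * x = (p : A) ^ (m + 1) * a)
    (h2 : ∃ a : A, x * (x * y - y * x) - (x * y - y * x) * x = (p : A) ^ (m + 2) * a)
    (h3 : ∃ a : A, y * (x * y - y * x) - (x * y - y * x) * y = (p : A) ^ (m + 2) * a) :
    ∃ a : A, (x * y) ^ p - x ^ p * y ^ p = (p : A) ^ (m + 2) * a := by
  have hcentral (k : ℕ) (a : A) : Commute ((p : A) ^ k) a := (Nat.cast_commute p a).pow_left k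
  let I := Ideal.span {(p : A) ^ (m + 2)}
  have := Ideal.isTwoSided_span_singleton_of_forall_commute (hcentral (m + 2))
  have hmem (z : A) : Ideal.Quotient.mk I z = 0 ↔ ∃ a, z = (p : A) ^ (m + 2) * a := by
    rw [Ideal.Quotient.eq_zero_iff_mem, Ideal.mem_span_singleton_of_forall_commute (hcentral _)]
  obtain ⟨c, hc⟩ := h1
  have hsq : Ideal.Quotient.mk I ((x * y - y * x) * (x * y - y * x)) = 0 := by
    refine (hmem _).2 ⟨(p : A) ^ m * (c * c), ?_⟩
    rw [hc, mul_assoc, ← mul_assoc c, ← (hcentral _ c).eq, ← mul_assoc, ← mul_assoc, ← pow_add,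
      show m + 1 + (m + 1) = m + 2 + m by ring, pow_add, mul_assoc, mul_assoc]
  have hchar : Ideal.Quotient.mk I (p • (x * y - y * x)) = 0 := by
    refine (hmem _).2 ⟨c, ?_⟩
    rw [nsmul_eq_mul, hc, ← mul_assoc, ← pow_succ']
  simp only [← hmem, map_sub, map_mul, map_pow, map_nsmul, sub_eq_zero] at h2 h3 hsq hchar ⊢
  -- in a ring, `⁅X, Y⁆` is by definition `X * Y - Y * X`
  exact mul_pow_prime_eq_of_lie hp hodd h2 h3 hsq hchar
end

section
/- Let p be an odd prime, L the Lie ring over Z[1/2] freely generated as a module by X, Y, [X,Y] with [X,Y] central, and U its universal enveloping algebra. Then in U the identity (X+Y)^p = Σ_{i=0}^{p} C(p,i) X^i Y^{p-i} + p·c, holds where c lies in the ideal generated by [X,Y]; consequently, in an associative ring A, if x, y satisfy [x,y] ≡ 0 mod p^{m+1}·A (with [x,y] commuting with x and y modulo p^{m+2}), then (x+y)^p ≡ Σ_{i=0}^{p} C(p,i) x^i y^{p-i} mod p^{m+2}·A. -/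
/-!
Write `Z = [X, Y]` and `N m = ∑ C(m, i) X^i Y^(m-i)` for the normally ordered binomial power.
When `Z` is central, `N m * (X + Y) = N (m + 1) - m Z N (m - 1)`: this is the three-term recursion
`He_{m+1} = x He_m - m He_{m-1}` of the Hermite polynomials, so
`(X + Y)^n = ∑_a (-1)^a C(n, 2a) (2a-1)!! Z^a N (n - 2a)`. For `n = p` an odd prime every term with
`a ≠ 0` has `0 < 2a < p`, hence a coefficient divisible by `p`. The congruence version follows by
working in `A / p^(m+2) A`, where `[x, y]` becomes central.
-/

open Finset
open scoped Nat

/-- The coefficient of `x ^ (n - 2 * a)` in the Hermite polynomial `Polynomial.hermite n`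
(see `Polynomial.coeff_hermite_explicit`); for `a = 0` the factor `(2 * a - 1)‼` is `0‼ = 1`. -/
def hermiteCoeff (n a : ℕ) : ℤ := (-1) ^ a * n.choose (2 * a) * (2 * a - 1)‼

lemma hermiteCoeff_zero_right (n : ℕ) : hermiteCoeff n 0 = 1 := by simp [hermiteCoeff]

lemma hermiteCoeff_of_lt {n a : ℕ} (h : n < 2 * a) : hermiteCoeff n a = 0 := by
  simp [hermiteCoeff, Nat.choose_eq_zero_of_lt h]

lemma hermiteCoeff_succ_succ (n a : ℕ) :
    hermiteCoeff (n + 1) (a + 1) =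
      hermiteCoeff n (a + 1) - hermiteCoeff n a * (n - 2 * a : ℕ) := by
  have hdf : (2 * a + 1)‼ = (2 * a + 1) * (2 * a - 1)‼ := Nat.doubleFactorial_add_one (2 * a)
  have hshift : (n.choose (2 * a + 1) * (2 * a + 1) : ℤ) = n.choose (2 * a) * (n - 2 * a : ℕ) := by
    exact_mod_cast Nat.choose_succ_right_eq n (2 * a)
  simp only [hermiteCoeff, show 2 * (a + 1) = 2 * a + 1 + 1 by ring, Nat.add_sub_cancel,
    Nat.choose_succ_succ' n (2 * a + 1), hdf]
  push_cast
  linear_combination (-1 : ℤ) ^ (a + 1) * ((2 * a - 1)‼ : ℤ) * hshift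

lemma prime_dvd_hermiteCoeff {p a : ℕ} (hp : p.Prime) (hodd : p ≠ 2) (ha : a ≠ 0) :
    (p : ℤ) ∣ hermiteCoeff p a := by
  rcases lt_or_ge p (2 * a) with hlt | hle
  · simp [hermiteCoeff_of_lt hlt]
  · obtain ⟨k, rfl⟩ := hp.odd_of_ne_two hodd
    have := hp.dvd_choose_self (k := 2 * a) (by omega) (by omega)
    exact ((Int.natCast_dvd_natCast.2 this).mul_left _).mul_right _

section OrderedAddPow

variable {R : Type*} [Ring R]

def orderedAddPow (X Y : R) (m : ℕ) : R :=
  ∑ i ∈ range (m + 1), (m.choose i : R) * (X ^ i * Y ^ (m - i))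

lemma orderedAddPow_zero (X Y : R) : orderedAddPow X Y 0 = 1 := by simp [orderedAddPow]

lemma map_orderedAddPow {S : Type*} [Ring S] (f : R →+* S) (X Y : R) (m : ℕ) :
    f (orderedAddPow X Y m) = orderedAddPow (f X) (f Y) m := by
  simp [orderedAddPow, map_sum]

lemma orderedAddPow_mem_closure (X Y : R) (m : ℕ) :
    orderedAddPow X Y m ∈ Subring.closure {X, Y} := by
  have hX : X ∈ Subring.closure {X, Y} := Subring.subset_closure (by simp)
  have hY : Y ∈ Subring.closure {X, Y} := Subring.subset_closure (by simp)
  exact Subring.sum_mem _ fun i _ =>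
    mul_mem (natCast_mem _ _) (mul_mem (pow_mem hX i) (pow_mem hY (m - i)))

lemma orderedAddPow_succ (X Y : R) (m : ℕ) :
    orderedAddPow X Y (m + 1) = X * orderedAddPow X Y m + orderedAddPow X Y m * Y := by
  rw [orderedAddPow, Finset.sum_choose_succ_mul (fun i j => X ^ i * Y ^ j), add_comm,
    orderedAddPow, Finset.mul_sum, Finset.sum_mul]
  congr 1
  · refine Finset.sum_congr rfl fun i _ => ?_
    rw [pow_succ']
    simp only [← mul_assoc, (Nat.cast_commute _ X).eq]
  · refine Finset.sum_congr rfl fun i hi => ?_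
    rw [mul_assoc, mul_assoc, ← pow_succ, Nat.sub_add_comm (Nat.lt_succ_iff.1 (mem_range.1 hi))]

variable {X Y : R}

lemma lie_pow_of_commute (hY : Commute ⁅X, Y⁆ Y) (k : ℕ) :
    ⁅X, Y ^ k⁆ = k * (⁅X, Y⁆ * Y ^ (k - 1)) := by
  induction k with
  | zero => simp [Ring.lie_def]
  | succ k ih =>
    have hleib : ⁅X, Y ^ (k + 1)⁆ = ⁅X, Y ^ k⁆ * Y + Y ^ k * ⁅X, Y⁆ := by
      simp only [Ring.lie_def, pow_succ]; noncomm_ring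
    rw [hleib, ih, ← (hY.pow_right k).eq]
    rcases k with _ | k
    · simp
    · rw [Nat.add_sub_cancel, mul_assoc, mul_assoc, ← pow_succ]; push_cast; noncomm_ring

lemma lie_orderedAddPow (hX : Commute ⁅X, Y⁆ X) (hY : Commute ⁅X, Y⁆ Y) (m : ℕ) :
    ⁅X, orderedAddPow X Y m⁆ = m * (⁅X, Y⁆ * orderedAddPow X Y (m - 1)) := by
  have hterm (i : ℕ) : ⁅X, (m.choose i : R) * (X ^ i * Y ^ (m - i))⁆ =
      ⁅X, Y⁆ * ((m.choose i * (m - i) : ℕ) * (X ^ i * Y ^ (m - 1 - i))) := by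
    have hcomm : Commute X ((m.choose i : R) * X ^ i) :=
      ((Nat.cast_commute _ X).symm).mul_right (Commute.self_pow X i)
    calc ⁅X, (m.choose i : R) * (X ^ i * Y ^ (m - i))⁆
        = (m.choose i : R) * X ^ i * ⁅X, Y ^ (m - i)⁆ := by
          rw [← mul_assoc, Ring.lie_def, Ring.lie_def, ← mul_assoc X, hcomm.eq]; noncomm_ring
      _ = ⁅X, Y⁆ * ((m.choose i * (m - i) : ℕ) * (X ^ i * Y ^ (m - 1 - i))) := by
          rw [lie_pow_of_commute hY, Nat.sub_right_comm]
          simp only [Nat.cast_mul, mul_assoc]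
          rw [(Nat.cast_commute _ (X ^ i)).symm.left_comm, (hX.pow_right i).symm.left_comm,
            (Nat.cast_commute _ ⁅X, Y⁆).symm.left_comm, (Nat.cast_commute _ ⁅X, Y⁆).symm.left_comm]
  have hsum : ⁅X, orderedAddPow X Y m⁆ =
      ∑ i ∈ range (m + 1), ⁅X, (m.choose i : R) * (X ^ i * Y ^ (m - i))⁆ := by
    simp only [orderedAddPow, Ring.lie_def, Finset.mul_sum, Finset.sum_mul, Finset.sum_sub_distrib]
  rw [hsum, Finset.sum_congr rfl fun i _ => hterm i, ← Finset.mul_sum,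
    (Nat.cast_commute _ _).left_comm]
  congr 1
  rcases m with _ | n
  · simp
  · rw [Finset.sum_range_succ, Nat.sub_self, mul_zero, Nat.cast_zero, zero_mul, add_zero,
      Nat.add_sub_cancel, orderedAddPow, Finset.mul_sum]
    refine Finset.sum_congr rfl fun i _ => ?_
    rw [← Nat.choose_mul_succ_eq, mul_comm, Nat.cast_mul, mul_assoc]

lemma orderedAddPow_mul_add (hX : Commute ⁅X, Y⁆ X) (hY : Commute ⁅X, Y⁆ Y) (m : ℕ) :
    orderedAddPow X Y m * (X + Y) =
      orderedAddPow X Y (m + 1) - m * (⁅X, Y⁆ * orderedAddPow X Y (m - 1)) := by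
  rw [orderedAddPow_succ, ← lie_orderedAddPow hX hY, Ring.lie_def]
  noncomm_ring

theorem add_pow_eq_sum_hermiteCoeff (hX : Commute ⁅X, Y⁆ X) (hY : Commute ⁅X, Y⁆ Y) (n : ℕ) :
    (X + Y) ^ n = ∑ a ∈ range (n + 1),
      (hermiteCoeff n a : R) * (⁅X, Y⁆ ^ a * orderedAddPow X Y (n - 2 * a)) := by
  induction n with
  | zero => simp [hermiteCoeff_zero_right, orderedAddPow_zero]
  | succ n ih =>
    set T : ℕ → R := fun a => ⁅X, Y⁆ ^ a * orderedAddPow X Y (n + 1 - 2 * a) with hT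
    have hstep (a : ℕ) :
        (hermiteCoeff n a : R) * (⁅X, Y⁆ ^ a * orderedAddPow X Y (n - 2 * a)) * (X + Y) =
          hermiteCoeff n a * T a - ((hermiteCoeff n a * (n - 2 * a : ℕ) : ℤ) : R) * T (a + 1) := by
      rcases lt_or_ge n (2 * a) with h | h
      · simp [hermiteCoeff_of_lt h]
      · rw [mul_assoc, mul_assoc, orderedAddPow_mul_add hX hY, hT,
          show n - 2 * a + 1 = n + 1 - 2 * a by omega,
          show n - 2 * a - 1 = n + 1 - 2 * (a + 1) by omega, mul_sub,
          (Nat.cast_commute _ _).symm.left_comm, ← mul_assoc (⁅X, Y⁆ ^ a), ← pow_succ]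
        push_cast
        noncomm_ring
    have hext : ∑ a ∈ range (n + 1), (hermiteCoeff n a : R) * T a =
        ∑ a ∈ range (n + 1), (hermiteCoeff n (a + 1) : R) * T (a + 1) + hermiteCoeff n 0 * T 0 := by
      rw [← Finset.sum_range_succ' (fun a => (hermiteCoeff n a : R) * T a),
        Finset.sum_range_succ _ (n + 1), hermiteCoeff_of_lt (by omega : n < 2 * (n + 1)),
        Int.cast_zero, zero_mul, add_zero]
    rw [pow_succ, ih, Finset.sum_mul, Finset.sum_congr rfl fun a _ => hstep a,
      Finset.sum_sub_distrib, hext, Finset.sum_range_succ' _ (n + 1)]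
    simp only [hermiteCoeff_succ_succ, hermiteCoeff_zero_right, Int.cast_sub, sub_mul,
      Finset.sum_sub_distrib]
    abel

theorem exists_add_pow_prime_eq_orderedAddPow {p : ℕ} (hp : p.Prime) (hodd : p ≠ 2)
    (hX : Commute ⁅X, Y⁆ X) (hY : Commute ⁅X, Y⁆ Y) :
    ∃ d ∈ Subring.closure {X, Y}, (X + Y) ^ p = orderedAddPow X Y p + p * (⁅X, Y⁆ * d) := by
  choose c hc using fun a : ℕ => prime_dvd_hermiteCoeff hp hodd a.succ_ne_zero
  have hZ : ⁅X, Y⁆ ∈ Subring.closure {X, Y} := by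
    rw [Ring.lie_def]
    exact sub_mem (mul_mem (Subring.subset_closure (by simp)) (Subring.subset_closure (by simp)))
      (mul_mem (Subring.subset_closure (by simp)) (Subring.subset_closure (by simp)))
  refine ⟨∑ a ∈ range p, (c a : R) * (⁅X, Y⁆ ^ a * orderedAddPow X Y (p - 2 * (a + 1))),
    Subring.sum_mem _ fun a _ => mul_mem (intCast_mem _ _)
      (mul_mem (pow_mem hZ a) (orderedAddPow_mem_closure X Y _)), ?_⟩
  rw [add_pow_eq_sum_hermiteCoeff hX hY, Finset.sum_range_succ', hermiteCoeff_zero_right,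
    Int.cast_one, one_mul, pow_zero, one_mul, mul_zero, Nat.sub_zero, add_comm,
    Finset.mul_sum, Finset.mul_sum]
  refine congrArg _ (Finset.sum_congr rfl fun a _ => ?_)
  rw [hc, Int.cast_mul, Int.cast_natCast, pow_succ', mul_assoc, mul_assoc,
    (Int.cast_commute (c a) ⁅X, Y⁆).symm.left_comm]

end OrderedAddPow

theorem Ideal.mem_span_singleton_of_commute {A : Type*} [Ring A] {c x : A}
    (hc : ∀ b, Commute c b) : x ∈ Ideal.span {c} ↔ ∃ a, c * a = x := by
  simp only [Ideal.mem_span_singleton', (hc _).eq]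

theorem Ideal.isTwoSided_span_singleton_of_commute {A : Type*} [Ring A] {c : A}
    (hc : ∀ b, Commute c b) : (Ideal.span {c}).IsTwoSided where
  mul_mem_of_left b h := by
    obtain ⟨a, rfl⟩ := (Ideal.mem_span_singleton_of_commute hc).1 h
    exact (Ideal.mem_span_singleton_of_commute hc).2 ⟨a * b, (mul_assoc c a b).symm⟩

theorem exists_add_pow_prime_sub_orderedAddPow_mem {A : Type*} [Ring A] {x y : A} {p : ℕ}
    (hp : p.Prime) (hodd : p ≠ 2) (I : Ideal A) [I.IsTwoSided]
    (hx : ⁅x, ⁅x, y⁆⁆ ∈ I) (hy : ⁅y, ⁅x, y⁆⁆ ∈ I) :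
    ∃ d, (x + y) ^ p - (orderedAddPow x y p + p * (⁅x, y⁆ * d)) ∈ I := by
  set f := Ideal.Quotient.mk I
  have hmap : ⁅f x, f y⁆ = f ⁅x, y⁆ := by simp [Ring.lie_def]
  have hcomm {w : A} (hw : ⁅w, ⁅x, y⁆⁆ ∈ I) : Commute ⁅f x, f y⁆ (f w) := by
    rw [hmap, Commute, SemiconjBy, ← map_mul, ← map_mul]
    exact (Ideal.Quotient.eq.2 hw).symm
  obtain ⟨d, -, hd⟩ := exists_add_pow_prime_eq_orderedAddPow hp hodd (hcomm hx) (hcomm hy)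
  obtain ⟨d, rfl⟩ := Ideal.Quotient.mk_surjective d
  refine ⟨d, Ideal.Quotient.eq.1 ?_⟩
  rw [map_pow, map_add, hd, map_add, map_orderedAddPow, map_mul, map_natCast, map_mul, hmap]

/-- (i) In the universal enveloping algebra of the Lie ring over `ℤ[1/2]` freely
generated by `X`, `Y`, `[X,Y]` with `[X,Y]` central — equivalently, in any ring `U` in which `2`
is invertible containing elements `X, Y` whose commutator `[X,Y]` commutes with `X` and `Y` —
one has `(X+Y)^p = Σ_{i=0}^{p} C(p,i) X^i Y^{p-i} + p·c` where `c` lies in the ideal generated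
by `[X,Y]` (inside the subring generated by `X` and `Y`).
(ii) Consequently, in an associative ring `A`, if `[x,y] ≡ 0 mod p^{m+1}A` and `[x,y]` commutes
with `x` and `y` modulo `p^{m+2}A`, then `(x+y)^p ≡ Σ_{i=0}^p C(p,i) x^i y^{p-i} mod p^{m+2}A`. -/
theorem add_pow_p_binomial (p : ℕ) (hp : p.Prime) (hodd : p ≠ 2) :
    (∀ (U : Type) [Ring U], ∀ _ : Invertible (2 : U), ∀ X Y : U,
      Commute (X * Y - Y * X) X → Commute (X * Y - Y * X) Y →
      ∃ d ∈ Subring.closure {X, Y},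
        (X + Y) ^ p =
          (∑ i ∈ Finset.range (p + 1), (p.choose i : U) * (X ^ i * Y ^ (p - i))) +
            (p : U) * ((X * Y - Y * X) * d)) ∧
    (∀ (A : Type) [Ring A], ∀ (m : ℕ) (x y : A),
      (∃ a : A, x * y - y * x = (p : A) ^ (m + 1) * a) →
      (∃ a : A, x * (x * y - y * x) - (x * y - y * x) * x = (p : A) ^ (m + 2) * a) →
      (∃ a : A, y * (x * y - y * x) - (x * y - y * x) * y = (p : A) ^ (m + 2) * a) →
      ∃ c : A,
        (x + y) ^ p =
          (∑ i ∈ Finset.range (p + 1), (p.choose i : A) * (x ^ i * y ^ (p - i))) +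
            (p : A) ^ (m + 2) * c) := by
  refine ⟨fun U _ _ X Y hX hY => exists_add_pow_prime_eq_orderedAddPow hp hodd hX hY, ?_⟩
  rintro A _ m x y ⟨a, ha⟩ ⟨ax, hax⟩ ⟨ay, hay⟩
  have hcentral (b : A) : Commute ((p : A) ^ (m + 2)) b := (Nat.cast_commute p b).pow_left _
  have := Ideal.isTwoSided_span_singleton_of_commute hcentral
  have hmem {w : A} := Ideal.mem_span_singleton_of_commute (x := w) hcentral
  obtain ⟨d, hd⟩ := exists_add_pow_prime_sub_orderedAddPow_mem hp hodd
    (Ideal.span {(p : A) ^ (m + 2)}) (hmem.2 ⟨ax, hax.symm⟩) (hmem.2 ⟨ay, hay.symm⟩)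
  obtain ⟨r, hr⟩ := hmem.1 hd
  refine ⟨a * d + r, ?_⟩
  rw [Ring.lie_def, ha, eq_sub_iff_add_eq] at hr
  rw [← hr, orderedAddPow, pow_succ' _ (m + 1)]
  noncomm_ring
end

section
/- Let A be an associative ring, p a prime, and i ≥ 0. If z, x ∈ A satisfy that [z,x] ≡ 0 mod p^{i+1}·A and [z,[z,x]] ≡ 0 mod p^{i+3}·A, and p is odd, then [z^p, x] ≡ p·z^{p-1}·[z,x] mod p^{i+3}·A. -/
/-!
Modulo the two-sided ideal `p^{i+3}A` the element `z` commutes with `c = [z,x]`, so there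
`[z^n, x] = ∑_{k<n} z^k c z^{n-1-k} = n z^{n-1} c` for every `n`.
-/

section

variable {A : Type*} [Ring A]

theorem Commute.lie_pow_succ_left {z x : A} (h : Commute z ⁅z, x⁆) (n : ℕ) :
    ⁅z ^ (n + 1), x⁆ = ((n + 1 : ℕ) : A) * z ^ n * ⁅z, x⁆ := by
  induction n with
  | zero => simp
  | succ n ih =>
    calc ⁅z ^ (n + 1 + 1), x⁆ = z * ⁅z ^ (n + 1), x⁆ + ⁅z, x⁆ * z ^ (n + 1) := by
          simp only [Ring.lie_def, pow_succ']; noncomm_ring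
      _ = ((n + 1 + 1 : ℕ) : A) * z ^ (n + 1) * ⁅z, x⁆ := by
          rw [ih, ← (h.pow_left (n + 1)).eq, ← mul_assoc, ← mul_assoc,
            (Nat.cast_commute _ z).symm.eq, mul_assoc _ z, ← pow_succ', Nat.cast_succ (n + 1),
            add_mul, add_mul, one_mul]

theorem Commute.lie_pow_left {z x : A} (h : Commute z ⁅z, x⁆) (n : ℕ) :
    ⁅z ^ n, x⁆ = n * z ^ (n - 1) * ⁅z, x⁆ := by
  cases n with
  | zero => simp [Ring.lie_def]
  | succ n => simpa using h.lie_pow_succ_left n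

namespace TwoSidedIdeal

def centralMultiples (q : A) (hq : ∀ a, Commute q a) : TwoSidedIdeal A :=
  .mk' {y | q ∣ y} (dvd_zero q) dvd_add dvd_neg.mpr
    (fun {a _} ⟨c, hc⟩ => ⟨a * c, by rw [hc, ← mul_assoc, ← (hq a).eq, mul_assoc]⟩)
    (fun hy => hy.mul_right _)

theorem mem_centralMultiples {q : A} (hq : ∀ a, Commute q a) {y : A} :
    y ∈ centralMultiples q hq ↔ q ∣ y :=
  mem_mk' ..

theorem lie_pow_left_sub_mem (I : TwoSidedIdeal A) {z x : A} (h : ⁅z, ⁅z, x⁆⁆ ∈ I) (n : ℕ) :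
    ⁅z ^ n, x⁆ - n * z ^ (n - 1) * ⁅z, x⁆ ∈ I := by
  rw [← ker_ringCon_mk' I, mem_ker] at h ⊢
  set f := I.ringCon.mk'
  have f_lie : ∀ a b, f ⁅a, b⁆ = ⁅f a, f b⁆ := fun a b => by
    simp only [Ring.lie_def, map_sub, map_mul]
  rw [f_lie, f_lie, ← commute_iff_lie_eq] at h
  simp only [map_sub, map_mul, map_pow, map_natCast, f_lie, h.lie_pow_left, sub_self]

end TwoSidedIdeal

end

theorem comm_pow_p_general (p : ℕ)
    (A : Type*) [Ring A] (i : ℕ) (z x : A)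
    (h2 : ∃ a : A, z * (z * x - x * z) - (z * x - x * z) * z = (p : A) ^ (i + 3) * a) :
    ∃ a : A, (z ^ p * x - x * z ^ p) - (p : A) * z ^ (p - 1) * (z * x - x * z) =
      (p : A) ^ (i + 3) * a := by
  have hq : ∀ a : A, Commute ((p : A) ^ (i + 3)) a := fun a => (Nat.cast_commute p a).pow_left _
  have h2' : ⁅z, ⁅z, x⁆⁆ ∈ TwoSidedIdeal.centralMultiples _ hq :=
    (TwoSidedIdeal.mem_centralMultiples hq).2 h2
  exact (TwoSidedIdeal.mem_centralMultiples hq).1 (TwoSidedIdeal.lie_pow_left_sub_mem _ h2' p)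

/-- if `p` is an odd prime, `A` an associative ring, `i ≥ 0`, and `z, x ∈ A`
satisfy `[z,x] ≡ 0 mod p^{i+1}A` and `[z,[z,x]] ≡ 0 mod p^{i+3}A`, then
`[z^p, x] ≡ p z^{p-1} [z,x] mod p^{i+3}A`. -/
theorem comm_pow_p (p : ℕ) (hp : p.Prime) (hodd : p ≠ 2)
    (A : Type*) [Ring A] (i : ℕ) (z x : A)
    (h1 : ∃ a : A, z * x - x * z = (p : A) ^ (i + 1) * a)
    (h2 : ∃ a : A, z * (z * x - x * z) - (z * x - x * z) * z = (p : A) ^ (i + 3) * a) :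
    ∃ a : A, (z ^ p * x - x * z ^ p) - (p : A) * z ^ (p - 1) * (z * x - x * z) =
      (p : A) ^ (i + 3) * a :=
  comm_pow_p_general p A i z x h2
end

section
/- Let A be an associative ring and p an odd prime. If z, x ∈ A with z central modulo p, then for every i ≥ 0, [z^{p^i}, x] ≡ p^i · z^{p^i - 1} · [z,x] mod p^{i+2}·A, provided the iterated commutator conditions hold (each [z, c] for c central mod p^{j} is central mod p^{j+1}). -/
/-!
Write `D a = a z - z a`. Right multiplication by `z` is `D + L_z`, and `D` commutes with left
multiplication `L_z`, so the binomial theorem gives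
`x z^N = ∑ⱼ (N choose j) z^(N-j) Dʲ x`. Since `z` is central modulo `p`, `Dʲ x ∈ pʲ A`. For
`N = p^i` the terms `j = 0, 1` give `z^N x - p^i z^(N-1) [z, x]`, and for `j ≥ 2` Kummer's
theorem gives `v_p((p^i choose j) pʲ) = i - v_p(j) + j ≥ i + 2`, because `p^(v_p j) ≤ j`
and `p ≥ 3`.
-/

open Finset LinearMap

theorem Nat.factorization_add_two_le {p j : ℕ} (hp : 2 < p) (hj : 2 ≤ j) :
    j.factorization p + 2 ≤ j := by
  set v := j.factorization p
  have hpv : p ^ v ≤ j := Nat.le_of_dvd (by omega) (Nat.ordProj_dvd j p)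
  rcases Nat.eq_zero_or_pos v with hv | hv
  · omega
  · have hlt : v ≤ p ^ (v - 1) := by
      have := Nat.lt_pow_self (n := v - 1) (by omega : 1 < p); omega
    have hpow : p ^ v = p * p ^ (v - 1) := by rw [← pow_succ']; congr 1; omega
    nlinarith

theorem Nat.pow_add_two_dvd_choose_prime_pow_mul_pow {p : ℕ} (hp : p.Prime) (hp2 : 2 < p)
    (i : ℕ) {j : ℕ} (hj : 2 ≤ j) : p ^ (i + 2) ∣ (p ^ i).choose j * p ^ j := by
  rcases lt_or_ge (p ^ i) j with hji | hji
  · simp [Nat.choose_eq_zero_of_lt hji]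
  have hC : (p ^ i).choose j ≠ 0 := (Nat.choose_pos hji).ne'
  have hkummer := Nat.factorization_choose_prime_pow_add_factorization hp hji (by omega)
  rw [hp.pow_dvd_iff_le_factorization (mul_ne_zero hC (pow_ne_zero _ hp.ne_zero)),
    Nat.factorization_mul hC (pow_ne_zero _ hp.ne_zero), Finsupp.add_apply,
    Nat.factorization_pow, Finsupp.smul_apply, hp.factorization_self, smul_eq_mul, mul_one]
  have := Nat.factorization_add_two_le hp2 hj
  omega

section

variable {A : Type*} [Ring A]

theorem mul_pow_eq_sum_choose (z a : A) (N : ℕ) :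
    a * z ^ N =
      ∑ j ∈ range (N + 1), N.choose j • (z ^ (N - j) * ((mulRight ℤ z - mulLeft ℤ z) ^ j) a) := by
  set D := mulRight ℤ z - mulLeft ℤ z
  have hc : Commute D (mulLeft ℤ z) := (commute_mulLeft_right z z).symm.sub_left (Commute.refl _)
  calc a * z ^ N = ((D + mulLeft ℤ z) ^ N) a := by rw [sub_add_cancel, pow_mulRight]; rfl
    _ = _ := by
      rw [hc.add_pow, LinearMap.sum_apply]
      refine sum_congr rfl fun j _ => ?_
      rw [(hc.pow_pow j (N - j)).eq, pow_mulLeft]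
      simp only [Module.End.mul_apply, Module.End.natCast_apply, map_nsmul, mulLeft_apply]

theorem pow_dvd_pow_apply {f : Module.End ℤ A} {q : ℕ} (h : ∀ a, (q : A) ∣ f a) (j : ℕ)
    (a : A) : (q : A) ^ j ∣ (f ^ j) a := by
  induction j generalizing a with
  | zero => simp
  | succ j ih =>
    obtain ⟨b, hb⟩ := h a
    obtain ⟨c, hc⟩ := ih b
    refine ⟨c, ?_⟩
    rw [pow_succ f, Module.End.mul_apply, hb, ← nsmul_eq_mul, map_nsmul, hc, nsmul_eq_mul,
      pow_succ', mul_assoc]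

theorem pow_dvd_nsmul_mul_of_pow_dvd {q n k m : ℕ} (hm : q ^ n ∣ m * q ^ k) {a : A}
    (ha : (q : A) ^ k ∣ a) (y : A) : (q : A) ^ n ∣ m • (y * a) := by
  obtain ⟨c, rfl⟩ := ha
  have hcomm : m • (y * ((q : A) ^ k * c)) = ((m * q ^ k : ℕ) : A) * (y * c) := by
    rw [nsmul_eq_mul, Nat.cast_mul, Nat.cast_pow, ← mul_assoc y,
      ← ((Nat.cast_commute q y).pow_left k).eq]
    simp only [mul_assoc]
  rw [hcomm, ← Nat.cast_pow]
  exact dvd_mul_of_dvd_left (Nat.cast_dvd_cast hm) _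

end

theorem comm_pow_p_iterated_general (p : ℕ) (hp : p.Prime) (hodd : p ≠ 2)
    (A : Type*) [Ring A]
    (z x : A)
    (hz : ∀ a : A, ∃ b : A, z * a - a * z = (p : A) * b) :
    ∀ i : ℕ, ∃ b : A,
      z ^ p ^ i * x - x * z ^ p ^ i =
        (p : A) ^ i * z ^ (p ^ i - 1) * (z * x - x * z) + (p : A) ^ (i + 2) * b := by
  intro i
  set D := mulRight ℤ z - mulLeft ℤ z
  have hD : ∀ a, (p : A) ∣ D a := fun a => by
    obtain ⟨b, hb⟩ := hz a
    exact ⟨-b, by rw [mul_neg, ← hb]; simp [D]⟩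
  obtain ⟨b, hb⟩ : (p : A) ^ (i + 2) ∣
      ∑ j ∈ range (p ^ i - 1), (p ^ i).choose (j + 2) • (z ^ (p ^ i - (j + 2)) * (D ^ (j + 2)) x) :=
    dvd_sum fun j _ => pow_dvd_nsmul_mul_of_pow_dvd
      (Nat.pow_add_two_dvd_choose_prime_pow_mul_pow hp (hp.two_le.lt_of_ne' hodd) i (by omega))
      (pow_dvd_pow_apply hD _ x) _
  have hexp := mul_pow_eq_sum_choose z x (p ^ i)
  rw [show p ^ i + 1 = p ^ i - 1 + 1 + 1 by have := Nat.one_le_pow i p hp.pos; omega,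
    sum_range_succ', sum_range_succ', hb] at hexp
  refine ⟨-b, ?_⟩
  rw [hexp]
  simp only [Nat.choose_zero_right, Nat.choose_one_right, pow_zero, pow_one, tsub_zero, zero_add,
    Module.End.one_apply, one_smul, nsmul_eq_mul, Nat.cast_pow, LinearMap.sub_apply,
    mulRight_apply, mulLeft_apply]
  noncomm_ring

/-- iterated commutator lemma.  Let `A` be an associative ring flat over
`ℤ/p^{n+1}ℤ`, `p` an odd prime, and `z, x ∈ A` with `z` central modulo `p`
(i.e. all commutators with `z` lie in `pA`).  Assume the iterated commutator condition:
for every `j` and every `c` central modulo `p^j`, the element `[z,c]` is central modulo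
`p^{j+1}`.  Then for every `i ≥ 0`,
`[z^{p^i}, x] ≡ p^i z^{p^i - 1} [z,x] mod p^{i+2}A`. -/
theorem comm_pow_p_iterated (p n : ℕ) (hp : p.Prime) (hodd : p ≠ 2)
    (A : Type*) [Ring A]
    (hchar : (p : A) ^ (n + 1) = 0)
    (hflat : ∀ k ≤ n + 1, ∀ a : A, (p : A) ^ k * a = 0 → ∃ b : A, a = (p : A) ^ (n + 1 - k) * b)
    (z x : A)
    (hz : ∀ a : A, ∃ b : A, z * a - a * z = (p : A) * b)
    (hiter : ∀ (j : ℕ) (c : A), (∀ a : A, ∃ b : A, c * a - a * c = (p : A) ^ j * b) →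
      ∀ a : A, ∃ b : A, (z * c - c * z) * a - a * (z * c - c * z) = (p : A) ^ (j + 1) * b) :
    ∀ i : ℕ, ∃ b : A,
      z ^ p ^ i * x - x * z ^ p ^ i =
        (p : A) ^ i * z ^ (p ^ i - 1) * (z * x - x * z) + (p : A) ^ (i + 2) * b :=
  comm_pow_p_iterated_general p hp hodd A z x hz
end

section
/- Let A_n be a flat associative algebra over R_n flat over Z/p^{n+1}Z. For x ∈ Z_i and y ∈ Z_j with 0 ≤ i ≤ j ≤ n and liftings x̃, ỹ ∈ A_n, the element [x̃,ỹ] mod p^{i+j+2} lies in the center Z_{i+j+1} of A_{i+j+1}. -/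
/-!
Write `⁅u, v⁆ = u v - v u`. The Jacobi identity gives
`⁅⁅x, y⁆, a⁆ = ⁅x, ⁅y, a⁆⁆ - ⁅y, ⁅x, a⁆⁆`. Here `⁅y, a⁆ = p^{j+1} b` with `p` central, so
`⁅x, ⁅y, a⁆⁆ = p^{j+1} ⁅x, b⁆ ∈ p^{j+1} p^{i+1} A`, and symmetrically for the second term.
-/

attribute [local instance] LieRing.ofAssociativeRing

section CentralMod

variable {A : Type*} [Ring A]

def IsCentralMod (c x : A) : Prop :=
  ∀ a : A, ∃ b : A, ⁅x, a⁆ = c * b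

theorem lie_mul_of_commute {c x : A} (hcx : Commute c x) (b : A) : ⁅x, c * b⁆ = c * ⁅x, b⁆ := by
  rw [Ring.lie_def, Ring.lie_def, mul_sub, ← mul_assoc, ← hcx.eq, mul_assoc, mul_assoc]

theorem IsCentralMod.lie {c d x y : A} (hc : ∀ a, Commute c a) (hd : ∀ a, Commute d a)
    (hx : IsCentralMod c x) (hy : IsCentralMod d y) : IsCentralMod (c * d) ⁅x, y⁆ := by
  intro a
  obtain ⟨b, hb⟩ := hy a
  obtain ⟨b', hb'⟩ := hx b
  obtain ⟨e, he⟩ := hx a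
  obtain ⟨e', he'⟩ := hy e
  refine ⟨b' - e', ?_⟩
  calc ⁅⁅x, y⁆, a⁆ = ⁅x, ⁅y, a⁆⁆ - ⁅y, ⁅x, a⁆⁆ := lie_lie x y a
    _ = d * (c * b') - c * (d * e') := by
        rw [hb, he, lie_mul_of_commute (hd x), lie_mul_of_commute (hc y), hb', he']
    _ = c * d * (b' - e') := by
        rw [← mul_assoc, ← mul_assoc, (hd c).eq, mul_sub]

end CentralMod

theorem comm_lift_central_higher_general (p : ℕ)
    (A : Type*) [Ring A]
    (i j : ℕ) (x y : A)
    (hx : ∀ a : A, ∃ b : A, x * a - a * x = (p : A) ^ (i + 1) * b)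
    (hy : ∀ a : A, ∃ b : A, y * a - a * y = (p : A) ^ (j + 1) * b) :
    ∀ a : A, ∃ b : A,
      (x * y - y * x) * a - a * (x * y - y * x) = (p : A) ^ (i + j + 2) * b := by
  have hpow : ∀ k a, Commute ((p : A) ^ k) a := fun k a => (Nat.cast_commute p a).pow_left k
  have h := IsCentralMod.lie (hpow (i + 1)) (hpow (j + 1)) hx hy
  rwa [← pow_add, show i + 1 + (j + 1) = i + j + 2 by omega] at h

/-- Lemma 1.1(2): with `A = A_n` flat over `ℤ/p^{n+1}ℤ`, if `x` lifts an
element of the center `Z_i` (i.e. `x` is central modulo `p^{i+1}`) and `y` lifts an element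
of `Z_j`, with `0 ≤ i ≤ j` and `i + j + 1 ≤ n`, then `[x,y] mod p^{i+j+2}` is central in
`A_{i+j+1}`, i.e. all commutators with `[x,y]` lie in `p^{i+j+2}A`. -/
theorem comm_lift_central_higher (p n : ℕ) (hp : p.Prime)
    (A : Type*) [Ring A]
    (hchar : (p : A) ^ (n + 1) = 0)
    (hflat : ∀ k ≤ n + 1, ∀ a : A, (p : A) ^ k * a = 0 → ∃ b : A, a = (p : A) ^ (n + 1 - k) * b)
    (i j : ℕ) (hij : i ≤ j) (hjn : i + j + 1 ≤ n) (x y : A)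
    (hx : ∀ a : A, ∃ b : A, x * a - a * x = (p : A) ^ (i + 1) * b)
    (hy : ∀ a : A, ∃ b : A, y * a - a * y = (p : A) ^ (j + 1) * b) :
    ∀ a : A, ∃ b : A,
      (x * y - y * x) * a - a * (x * y - y * x) = (p : A) ^ (i + j + 2) * b :=
  comm_lift_central_higher_general p A i j x y hx hy
end

section
/- Let p = 2 and Z_0 a Poisson algebra over R_0 with Poisson structure given by an exact symplectic form ω = dη on the smooth R_0-algebra Z_0. Define z^{[2]} = L_{t_z} i_{t_z} η − i_{t_z^{[2]}} η, where t_z is the Hamiltonian vector field of z. Then for all x, y ∈ Z_0: (x+y)^{[2]} − x^{[2]} − y^{[2]} = {x,y}; {x^{[2]}, y} = {x,{x,y}}; and (xy)^{[2]} = y²x^{[2]} + x²y^{[2]} + xy{x,y}. -/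
open KaehlerDifferential

/-- The square `θ^{[2]} = θ ∘ θ` of a derivation, which is again a derivation in
characteristic `2` (the second power in the restricted Lie algebra of derivations). -/
noncomputable def derSq {R A : Type*} [CommRing R] [CommRing A] [Algebra R A]
    (h2 : (2 : A) = 0) (θ : Derivation R A A) : Derivation R A A where
  toLinearMap := θ.toLinearMap ∘ₗ θ.toLinearMap
  map_one_eq_zero' := by simp
  leibniz' := fun a b => by
    have h : (θ : A → A) ((θ : A → A) (a * b)) =
        a * (θ : A → A) ((θ : A → A) b) + b * (θ : A → A) ((θ : A → A) a) +
          2 * ((θ : A → A) a * (θ : A → A) b) := by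
      rw [Derivation.leibniz]
      simp only [smul_eq_mul, map_add, Derivation.leibniz]
      ring
    simp only [LinearMap.coe_comp, Function.comp_apply, Derivation.coeFn_coe, smul_eq_mul]
    rw [h, h2]
    ring

/-- The pairing `i_θ η` of a vector field (derivation) with a `1`-form. -/
noncomputable def pairD {R A : Type*} [CommRing R] [CommRing A] [Algebra R A]
    (θ : Derivation R A A) (η : Ω[A⁄R]) : A :=
  θ.liftKaehlerDifferential η

/-- The `2`-form `ω = dη` evaluated on a pair of vector fields, by Cartan's formula. -/
noncomputable def dEta {R A : Type*} [CommRing R] [CommRing A] [Algebra R A]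
    (η : Ω[A⁄R]) (θ₁ θ₂ : Derivation R A A) : A :=
  θ₁ (pairD θ₂ η) - θ₂ (pairD θ₁ η) - pairD ⁅θ₁, θ₂⁆ η

/-- The restricted structure `z^{[2]} = L_{t_z} i_{t_z} η − i_{t_z^{[2]}} η` associated to
the primitive `η` and a choice of Hamiltonian vector fields `t`. -/
noncomputable def restrictedSq {R A : Type*} [CommRing R] [CommRing A] [Algebra R A]
    (h2 : (2 : A) = 0) (η : Ω[A⁄R]) (t : A → Derivation R A A) (z : A) : A :=
  t z (pairD (t z) η) - pairD (derSq h2 (t z)) η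

/-!
For a derivation `a` put `q(a) = a (i_a η) - i_{a^{[2]}} η`, so that `z^{[2]} = q(t_z)`.
In characteristic `2`, `q` is a quadratic form on vector fields with polar form `ω = dη` and
`q(c a) = c² q(a)`, and Cartan calculus gives `i_{a^{[2]}} ω = L_a i_a ω + d q(a)`.
For `a = t_z` we have `i_a ω = dz`, so `L_a i_a ω = d(t_z z) = 0` and non-degeneracy gives
`t_{z^{[2]}} = t_z^{[2]}`.  Non-degeneracy also makes `z ↦ t_z` additive and a derivation,
and the three identities follow by expanding `q`.
-/

section Derivations

variable {R A : Type*} [CommRing R] [CommRing A] [Algebra R A]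

lemma pairD_eq_linearMapEquivDerivation_symm (θ : Derivation R A A) (η : Ω[A⁄R]) :
    pairD θ η = (linearMapEquivDerivation R A).symm θ η := rfl

lemma pairD_add (θ₁ θ₂ : Derivation R A A) (η : Ω[A⁄R]) :
    pairD (θ₁ + θ₂) η = pairD θ₁ η + pairD θ₂ η := by
  simp only [pairD_eq_linearMapEquivDerivation_symm, map_add, LinearMap.add_apply]

lemma pairD_sub (θ₁ θ₂ : Derivation R A A) (η : Ω[A⁄R]) :
    pairD (θ₁ - θ₂) η = pairD θ₁ η - pairD θ₂ η := by
  simp only [pairD_eq_linearMapEquivDerivation_symm, map_sub, LinearMap.sub_apply]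

lemma pairD_neg (θ : Derivation R A A) (η : Ω[A⁄R]) : pairD (-θ) η = -pairD θ η := by
  simp only [pairD_eq_linearMapEquivDerivation_symm, map_neg, LinearMap.neg_apply]

lemma pairD_zero (η : Ω[A⁄R]) : pairD (0 : Derivation R A A) η = 0 := by
  simp only [pairD_eq_linearMapEquivDerivation_symm, map_zero, LinearMap.zero_apply]

lemma pairD_smul (c : A) (θ : Derivation R A A) (η : Ω[A⁄R]) :
    pairD (c • θ) η = c * pairD θ η := by
  simp only [pairD_eq_linearMapEquivDerivation_symm, map_smul, LinearMap.smul_apply, smul_eq_mul]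

lemma derSq_apply (h2 : (2 : A) = 0) (θ : Derivation R A A) (f : A) :
    derSq h2 θ f = θ (θ f) := rfl

lemma derSq_add (h2 : (2 : A) = 0) (a b : Derivation R A A) :
    derSq h2 (a + b) = derSq h2 a + derSq h2 b + ⁅a, b⁆ := by
  ext f
  simp only [derSq_apply, Derivation.add_apply, Derivation.commutator_apply, map_add]
  linear_combination b (a f) * h2

lemma derSq_smul (h2 : (2 : A) = 0) (c : A) (θ : Derivation R A A) :
    derSq h2 (c • θ) = (c * c) • derSq h2 θ + (c * θ c) • θ := by
  ext f
  simp only [derSq_apply, Derivation.add_apply, Derivation.smul_apply, smul_eq_mul,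
    Derivation.leibniz]
  ring

lemma Derivation.smul_lie (c : A) (a θ : Derivation R A A) :
    ⁅c • a, θ⁆ = c • ⁅a, θ⁆ - θ c • a := by
  ext f
  simp only [Derivation.commutator_apply, Derivation.sub_apply, Derivation.smul_apply,
    smul_eq_mul, Derivation.leibniz]
  ring

lemma lie_lie_self_eq_derSq_lie (h2 : (2 : A) = 0) (a θ : Derivation R A A) :
    ⁅a, ⁅a, θ⁆⁆ = ⁅derSq h2 a, θ⁆ := by
  ext f
  simp only [Derivation.commutator_apply, derSq_apply, map_sub]
  linear_combination (θ (a (a f)) - a (θ (a f))) * h2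

end Derivations

section TwoForm

variable {R A : Type*} [CommRing R] [CommRing A] [Algebra R A] (η : Ω[A⁄R])

lemma dEta_self (θ : Derivation R A A) : dEta η θ θ = 0 := by
  simp only [dEta, lie_self, pairD_zero, sub_self]

lemma dEta_swap (θ₁ θ₂ : Derivation R A A) : dEta η θ₁ θ₂ = - dEta η θ₂ θ₁ := by
  rw [dEta, dEta, ← lie_skew, pairD_neg]
  ring

lemma dEta_add_left (u v θ : Derivation R A A) :
    dEta η (u + v) θ = dEta η u θ + dEta η v θ := by
  simp only [dEta, add_lie, pairD_add, Derivation.add_apply, map_add]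
  ring

lemma dEta_sub_left (u v θ : Derivation R A A) :
    dEta η (u - v) θ = dEta η u θ - dEta η v θ := by
  simp only [dEta, sub_lie, pairD_sub, Derivation.sub_apply, map_sub]
  ring

lemma dEta_smul_left (c : A) (u θ : Derivation R A A) :
    dEta η (c • u) θ = c * dEta η u θ := by
  simp only [dEta, Derivation.smul_lie, pairD_sub, pairD_smul, Derivation.smul_apply,
    smul_eq_mul, Derivation.leibniz]
  ring

lemma dEta_smul_right (c : A) (u θ : Derivation R A A) :
    dEta η u (c • θ) = c * dEta η u θ := by
  rw [dEta_swap, dEta_smul_left, dEta_swap η θ]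
  ring

end TwoForm

section RestrictedSqDer

variable {R A : Type*} [CommRing R] [CommRing A] [Algebra R A] (h2 : (2 : A) = 0)
  (η : Ω[A⁄R])

noncomputable def restrictedSqDer (a : Derivation R A A) : A :=
  a (pairD a η) - pairD (derSq h2 a) η

lemma restrictedSq_eq_restrictedSqDer (t : A → Derivation R A A) (z : A) :
    restrictedSq h2 η t z = restrictedSqDer h2 η (t z) := rfl

lemma restrictedSqDer_add (a b : Derivation R A A) :
    restrictedSqDer h2 η (a + b) =
      restrictedSqDer h2 η a + restrictedSqDer h2 η b + dEta η b a := by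
  simp only [restrictedSqDer, dEta, derSq_add, pairD_add, Derivation.add_apply, map_add,
    ← lie_skew b a, pairD_neg]
  linear_combination (a (pairD b η) - pairD ⁅a, b⁆ η) * h2

lemma restrictedSqDer_smul (c : A) (a : Derivation R A A) :
    restrictedSqDer h2 η (c • a) = c ^ 2 * restrictedSqDer h2 η a := by
  simp only [restrictedSqDer, derSq_smul, pairD_add, pairD_smul, Derivation.smul_apply,
    smul_eq_mul, Derivation.leibniz]
  ring

lemma dEta_derSq (a θ : Derivation R A A) :
    dEta η (derSq h2 a) θ =
      a (dEta η a θ) + dEta η a ⁅a, θ⁆ + θ (restrictedSqDer h2 η a) := by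
  simp only [dEta, restrictedSqDer, ← lie_lie_self_eq_derSq_lie h2, map_sub, derSq_apply,
    Derivation.commutator_apply]
  linear_combination (a (θ (pairD a η)) - θ (a (pairD a η))) * h2

end RestrictedSqDer

section Hamiltonian

variable {R A : Type*} [CommRing R] [CommRing A] [Algebra R A]

/-- `t z` is the Hamiltonian vector field of `z`: `dz = i_{t z} ω`. -/
def IsHamiltonian (η : Ω[A⁄R]) (t : A → Derivation R A A) : Prop :=
  ∀ (z : A) (θ : Derivation R A A), dEta η (t z) θ = θ z

def IsNondegenerate (η : Ω[A⁄R]) : Prop :=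
  ∀ θ : Derivation R A A, (∀ θ' : Derivation R A A, dEta η θ θ' = 0) → θ = 0

variable {η : Ω[A⁄R]} {t : A → Derivation R A A}

lemma IsHamiltonian.apply_self (hham : IsHamiltonian η t) (z : A) : t z z = 0 :=
  (hham z (t z)).symm.trans (dEta_self η (t z))

lemma IsHamiltonian.eq_of_dEta (hham : IsHamiltonian η t) (hnd : IsNondegenerate η) {z : A}
    {θ : Derivation R A A} (h : ∀ θ', dEta η θ θ' = θ' z) : t z = θ :=
  sub_eq_zero.mp <| hnd _ fun θ' => by rw [dEta_sub_left, hham, h, sub_self]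

lemma IsHamiltonian.map_add (hham : IsHamiltonian η t) (hnd : IsNondegenerate η) (x y : A) :
    t (x + y) = t x + t y :=
  hham.eq_of_dEta hnd fun θ => by rw [dEta_add_left, hham, hham, _root_.map_add]

lemma IsHamiltonian.map_mul (hham : IsHamiltonian η t) (hnd : IsNondegenerate η) (x y : A) :
    t (x * y) = x • t y + y • t x :=
  hham.eq_of_dEta hnd fun θ => by
    rw [dEta_add_left, dEta_smul_left, dEta_smul_left, hham, hham, Derivation.leibniz,
      smul_eq_mul, smul_eq_mul]

lemma IsHamiltonian.map_restrictedSq (hham : IsHamiltonian η t) (hnd : IsNondegenerate η)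
    (h2 : (2 : A) = 0) (x : A) : t (restrictedSq h2 η t x) = derSq h2 (t x) :=
  hham.eq_of_dEta hnd fun θ => by
    rw [dEta_derSq, hham, hham, Derivation.commutator_apply, hham.apply_self, map_zero,
      sub_zero, ← restrictedSq_eq_restrictedSqDer]
    linear_combination t x (θ x) * h2

end Hamiltonian

theorem restricted_structure_identities_general (R A : Type) [CommRing R] [CommRing A] [Algebra R A]
    (h2 : (2 : A) = 0)
    (η : Ω[A⁄R])
    (t : A → Derivation R A A)
    (hham : ∀ (z : A) (θ : Derivation R A A), dEta η (t z) θ = θ z)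
    (hnd : ∀ θ : Derivation R A A, (∀ θ' : Derivation R A A, dEta η θ θ' = 0) → θ = 0) :
    ∀ x y : A,
      (restrictedSq h2 η t (x + y) - restrictedSq h2 η t x - restrictedSq h2 η t y =
        t x y) ∧
      (t (restrictedSq h2 η t x) y = t x (t x y)) ∧
      (restrictedSq h2 η t (x * y) =
        y ^ 2 * restrictedSq h2 η t x + x ^ 2 * restrictedSq h2 η t y + x * y * t x y) := by
  intro x y
  refine ⟨?_, by rw [IsHamiltonian.map_restrictedSq hham hnd, derSq_apply], ?_⟩
  · simp only [restrictedSq_eq_restrictedSqDer]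
    rw [IsHamiltonian.map_add hham hnd, restrictedSqDer_add, hham]
    ring
  · simp only [restrictedSq_eq_restrictedSqDer]
    rw [IsHamiltonian.map_mul hham hnd, add_comm, restrictedSqDer_add, restrictedSqDer_smul,
      restrictedSqDer_smul, dEta_smul_left, dEta_smul_right, hham]
    ring

/-- Let `p = 2` and `Z_0` a Poisson algebra over `R_0` whose Poisson structure
is given by an exact symplectic form `ω = dη` on the smooth `R_0`-algebra `Z_0`; `t_z` is the
Hamiltonian vector field of `z` (`dz = i_{t_z}ω`, `ω` non-degenerate) and
`{x,y} = i_{t_x} i_{t_y} ω = t_x y`.  Define `z^{[2]} = L_{t_z} i_{t_z} η − i_{t_z^{[2]}} η`.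
Then for all `x, y ∈ Z_0`:
`(x+y)^{[2]} − x^{[2]} − y^{[2]} = {x,y}`, `{x^{[2]}, y} = {x,{x,y}}`, and
`(xy)^{[2]} = y²x^{[2]} + x²y^{[2]} + xy{x,y}`. -/
theorem restricted_structure_identities (R A : Type) [CommRing R] [CommRing A] [Algebra R A]
    (h2R : (2 : R) = 0) (h2 : (2 : A) = 0)
    (hsmooth : Algebra.Smooth R A) (η : Ω[A⁄R])
    (t : A → Derivation R A A)
    (hham : ∀ (z : A) (θ : Derivation R A A), dEta η (t z) θ = θ z)
    (hnd : ∀ θ : Derivation R A A, (∀ θ' : Derivation R A A, dEta η θ θ' = 0) → θ = 0) :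
    ∀ x y : A,
      (restrictedSq h2 η t (x + y) - restrictedSq h2 η t x - restrictedSq h2 η t y =
        t x y) ∧
      (t (restrictedSq h2 η t x) y = t x (t x y)) ∧
      (restrictedSq h2 η t (x * y) =
        y ^ 2 * restrictedSq h2 η t x + x ^ 2 * restrictedSq h2 η t y + x * y * t x y) :=
  restricted_structure_identities_general R A h2 η t hham hnd
end

section
/- Let p = 2 and A_n flat over R_n flat over Z/2^{n+1}Z, with the center Z_1 generated appropriately (e.g., Φ_1 surjective). If x ∈ Z_1 and y ∈ Z_i with 1 ≤ i ≤ m, and x̃, ỹ ∈ A_n are any liftings with x̃ = w̃² + 2ṽ for w̃, ṽ central modulo 2, then [x̃, ỹ] ≡ 0 mod 2^{i+2}. -/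
/-!
Write `⁅w, y⁆ = 2^(i+1) c`. Then `⁅w², y⁆ = w ⁅w, y⁆ + ⁅w, y⁆ w = 2^(i+1) (w c + c w)`, and
`w c + c w = 2 c w + ⁅w, c⁆` is divisible by `2` because `w` is central modulo `2`: squaring
gains the extra factor of `2`. The term `2 ⁅v, y⁆` gains it from the coefficient.
-/

theorem two_pow_succ_dvd_lie_sq {A : Type*} [Ring A] {k : ℕ} {w y : A}
    (hw : ∀ a : A, 2 ∣ ⁅w, a⁆) (hwy : (2 : A) ^ k ∣ ⁅w, y⁆) :
    (2 : A) ^ (k + 1) ∣ ⁅w ^ 2, y⁆ := by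
  obtain ⟨c, hc⟩ := hwy
  obtain ⟨d, hd⟩ := hw c
  have hcentral : Commute ((2 : A) ^ k) w := (Commute.ofNat_left 2 w).pow_left k
  refine ⟨c * w + d, ?_⟩
  calc ⁅w ^ 2, y⁆ = w * ⁅w, y⁆ + ⁅w, y⁆ * w := by simp only [Ring.lie_def]; noncomm_ring
    _ = 2 ^ k * (2 * (c * w) + ⁅w, c⁆) := by
        rw [hc, ← mul_assoc, ← hcentral.eq, Ring.lie_def]; noncomm_ring
    _ = 2 ^ (k + 1) * (c * w + d) := by rw [hd, pow_succ]; noncomm_ring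

theorem char_two_comm_vanishing_general
    (A : Type*) [Ring A]
    (i : ℕ)
    (x y w v : A)
    (hw : ∀ a : A, ∃ b : A, w * a - a * w = (2 : A) * b)
    (hx : x = w ^ 2 + 2 * v)
    (hy : ∀ a : A, ∃ b : A, y * a - a * y = (2 : A) ^ (i + 1) * b) :
    ∃ b : A, x * y - y * x = (2 : A) ^ (i + 2) * b := by
  have hyw : (2 : A) ^ (i + 1) ∣ ⁅w, y⁆ := by
    rw [Ring.lie_def, ← neg_sub]; exact dvd_neg.mpr (hy w)
  have hyv : (2 : A) ^ (i + 2) ∣ 2 * ⁅v, y⁆ := by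
    rw [pow_succ', Ring.lie_def, ← neg_sub]; exact mul_dvd_mul_left 2 (dvd_neg.mpr (hy v))
  have hxy : x * y - y * x = ⁅w ^ 2, y⁆ + 2 * ⁅v, y⁆ := by
    simp only [hx, Ring.lie_def]; noncomm_ring
  rw [hxy]
  exact dvd_add (two_pow_succ_dvd_lie_sq hw hyw) hyv

/-- Let `p = 2` and `A = A_n` flat over `ℤ/2^{n+1}ℤ` (so `2^{n+1} = 0` in `A`
and multiplication by `2^k` has kernel `2^{n+1-k}A`).  If `x̃ = w̃² + 2ṽ` with `w̃, ṽ`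
central modulo `2` (as follows from the surjectivity of `Φ_1` onto `Z_1`), and `ỹ` lifts an
element of the center `Z_i` (i.e. `ỹ` is central modulo `2^{i+1}`) with `1 ≤ i ≤ n`, then
`[x̃, ỹ] ≡ 0 mod 2^{i+2}`. -/
theorem char_two_comm_vanishing (n : ℕ)
    (A : Type*) [Ring A]
    (hchar : (2 : A) ^ (n + 1) = 0)
    (hflat : ∀ k ≤ n + 1, ∀ a : A, (2 : A) ^ k * a = 0 → ∃ b : A, a = (2 : A) ^ (n + 1 - k) * b)
    (i : ℕ) (hi : 1 ≤ i) (hin : i ≤ n)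
    (x y w v : A)
    (hw : ∀ a : A, ∃ b : A, w * a - a * w = (2 : A) * b)
    (hv : ∀ a : A, ∃ b : A, v * a - a * v = (2 : A) * b)
    (hx : x = w ^ 2 + 2 * v)
    (hy : ∀ a : A, ∃ b : A, y * a - a * y = (2 : A) ^ (i + 1) * b) :
    ∃ b : A, x * y - y * x = (2 : A) ^ (i + 2) * b :=
  char_two_comm_vanishing_general A i x y w v hw hx hy
end
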